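/- Let I be an SMI instance in which every stable matching matches every man and every woman, let M_0 be a man-optimal and woman-pessimal stable matching of I, and let M_z be a woman-optimal and man-pessimal stable matching of I. Then there exists an integer a with d_U(M_0) ≤ a ≤ d_U(M_z) and a stable matching N of the truncated instance I_T of I at rank a such that N matches every man and every woman, N is woman-optimal in I_T (for every stable matching M' of I_T and every woman w matched in M', rank(w, N(w)) ≤ rank(w, M'(w))), N is a stable matching of I, and N minimises the regret sum d_U + d_W over all stable matchings of I. -/

import Mathlib

/-- An instance of the Stable Marriage problem with Incomplete lists (SMI):
men `U` and women `W`, each agent ranking a subset of the other side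
in strict order of preference (represented as a duplicate-free list,
most-preferred first). -/
structure SMI (U W : Type) where
  mpref : U → List W
  wpref : W → List U
  mpref_nodup : ∀ m, (mpref m).Nodup
  wpref_nodup : ∀ w, (wpref w).Nodup

namespace SMI

variable {U W : Type}

/-- The (1-based) rank of woman `w` on man `m`'s preference list. -/
def mrank [DecidableEq W] (I : SMI U W) (m : U) (w : W) : ℕ :=
  (I.mpref m).idxOf w + 1

/-- The (1-based) rank of man `m` on woman `w`'s preference list. -/
def wrank [DecidableEq U] (I : SMI U W) (w : W) (m : U) : ℕ :=
  (I.wpref w).idxOf m + 1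

/-- `(m, w)` is an acceptable pair if each appears on the other's list. -/
def Acceptable (I : SMI U W) (m : U) (w : W) : Prop :=
  w ∈ I.mpref m ∧ m ∈ I.wpref w

/-- A matching: a set of acceptable pairs in which every man and every
woman appears at most once. -/
def IsMatching (I : SMI U W) (M : Set (U × W)) : Prop :=
  (∀ p ∈ M, I.Acceptable p.1 p.2) ∧
  (∀ p ∈ M, ∀ q ∈ M, p.1 = q.1 → p = q) ∧
  (∀ p ∈ M, ∀ q ∈ M, p.2 = q.2 → p = q)

/-- Man `m` is matched in `M`. -/
def MMatched (M : Set (U × W)) (m : U) : Prop := ∃ w, (m, w) ∈ M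

/-- Woman `w` is matched in `M`. -/
def WMatched (M : Set (U × W)) (w : W) : Prop := ∃ m, (m, w) ∈ M

/-- `M` matches every man and every woman. -/
def Perfect (M : Set (U × W)) : Prop :=
  (∀ m : U, MMatched M m) ∧ (∀ w : W, WMatched M w)

/-- `(m, w)` is a blocking pair of `M`. -/
def Blocks [DecidableEq U] [DecidableEq W] (I : SMI U W) (M : Set (U × W))
    (m : U) (w : W) : Prop :=
  I.Acceptable m w ∧
  (¬ MMatched M m ∨ ∃ w', (m, w') ∈ M ∧ I.mrank m w < I.mrank m w') ∧
  (¬ WMatched M w ∨ ∃ m', (m', w) ∈ M ∧ I.wrank w m < I.wrank w m')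

/-- A stable matching: a matching admitting no blocking pair. -/
def IsStable [DecidableEq U] [DecidableEq W] (I : SMI U W) (M : Set (U × W)) : Prop :=
  I.IsMatching M ∧ ∀ m w, ¬ I.Blocks M m w

/-- The man-degree `d_U(M)`: the largest rank of any man in `M`. -/
noncomputable def dU [DecidableEq W] (I : SMI U W) (M : Set (U × W)) : ℕ :=
  sSup {r : ℕ | ∃ p ∈ M, r = I.mrank p.1 p.2}

/-- The woman-degree `d_W(M)`: the largest rank of any woman in `M`. -/
noncomputable def dW [DecidableEq U] (I : SMI U W) (M : Set (U × W)) : ℕ :=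
  sSup {r : ℕ | ∃ p ∈ M, r = I.wrank p.2 p.1}

/-- The regret-equality score `r(M) = |d_U(M) - d_W(M)|`. -/
noncomputable def rScore [DecidableEq U] [DecidableEq W] (I : SMI U W) (M : Set (U × W)) : ℕ :=
  ((I.dU M : ℤ) - (I.dW M : ℤ)).natAbs

/-- `M0` is a man-optimal and woman-pessimal stable matching of `I`. -/
def ManOptWomanPess [DecidableEq U] [DecidableEq W] (I : SMI U W)
    (M0 : Set (U × W)) : Prop :=
  I.IsStable M0 ∧ ∀ M, I.IsStable M →
    (∀ m w0 w, (m, w0) ∈ M0 → (m, w) ∈ M → I.mrank m w0 ≤ I.mrank m w) ∧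
    (∀ w m0 m, (m0, w) ∈ M0 → (m, w) ∈ M → I.wrank w m ≤ I.wrank w m0)

/-- `Mz` is a woman-optimal and man-pessimal stable matching of `I`. -/
def WomanOptManPess [DecidableEq U] [DecidableEq W] (I : SMI U W)
    (Mz : Set (U × W)) : Prop :=
  I.IsStable Mz ∧ ∀ M, I.IsStable M →
    (∀ w mz m, (mz, w) ∈ Mz → (m, w) ∈ M → I.wrank w mz ≤ I.wrank w m) ∧
    (∀ m wz w, (m, wz) ∈ Mz → (m, w) ∈ M → I.mrank m w ≤ I.mrank m wz)

/-- The truncated instance `I_T` of `I` at rank `a`: every pair `(m, w)` with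
`rank(m, w) > a` is deleted, i.e. each man's list is cut after his `a`-th
choice, and he is removed from the lists of the women thereby deleted. -/
def truncate [DecidableEq W] (I : SMI U W) (a : ℕ) : SMI U W where
  mpref m := (I.mpref m).take a
  wpref w := (I.wpref w).filter (fun m => decide (w ∈ (I.mpref m).take a))
  mpref_nodup m := ((I.mpref m).take_sublist a).nodup (I.mpref_nodup m)
  wpref_nodup w := (I.wpref_nodup w).filter _

end SMI

/-!
Take a stable matching `Ms` of `I` of minimum regret sum and truncate at `a = d_U(Ms)`. Then `Ms`
is still stable in `I_T`, so by the rural hospitals theorem every stable matching of `I_T` is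
perfect, and joining stable matchings (each woman takes the better of her two partners) yields a
woman-optimal stable matching `N` of `I_T`. Every man is matched in `N` within his first `a`
choices, so `N` is stable in `I` with `d_U(N) ≤ a`; every woman does at least as well in `N` as in
`Ms`, so `d_W(N) ≤ d_W(Ms)`. The bounds on `a` are man-optimality of `M_0` and
man-pessimality of `M_z`.
-/

theorem List.idxOf_filter_lt_idxOf_filter_iff {α : Type*} [DecidableEq α] {p : α → Bool}
    {l : List α} {x y : α} (hx : p x) (hy : p y) :
    (l.filter p).idxOf x < (l.filter p).idxOf y ↔ l.idxOf x < l.idxOf y := by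
  induction l with
  | nil => simp
  | cons a t ih =>
    by_cases ha : p a <;> by_cases hax : a = x <;> by_cases hay : a = y <;>
      simp_all [List.idxOf_cons_ne]

theorem forall_exists_rel_of_injective_rels {α β : Type*} [Finite α] {A : Set α} {B : Set β}
    {R S : α → β → Prop} (hR : ∀ a a' b, R a b → R a' b → a = a')
    (hS : ∀ a b b', S a b → S a b' → b = b')
    (hAB : ∀ a ∈ A, ∃ b ∈ B, R a b) (hBA : ∀ b ∈ B, ∃ a ∈ A, S a b) :
    ∀ a ∈ A, ∃ b, S a b := by
  choose f hfB hf using hAB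
  choose g hgA hg using hBA
  let F : A → A := fun x => ⟨g (f x x.2) (hfB x x.2), hgA _ _⟩
  have hF : F.Injective := by
    rintro ⟨x, hx⟩ ⟨y, hy⟩ hxy
    have hg' : g (f x hx) (hfB x hx) = g (f y hy) (hfB y hy) := congrArg Subtype.val hxy
    have hfxy : f x hx = f y hy := hS _ _ _ (hg _ _) (hg'.symm ▸ hg (f y hy) _)
    exact Subtype.ext (hR _ _ _ (hf x hx) (hfxy ▸ hf y hy))
  intro a ha
  obtain ⟨⟨x, hx⟩, hxa⟩ := Finite.surjective_of_injective hF ⟨a, ha⟩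
  have hga : g (f x hx) (hfB x hx) = a := congrArg Subtype.val hxa
  exact ⟨f x hx, hga ▸ hg _ _⟩

namespace SMI

variable {U W : Type}

-- `J.Blocks M m w` unfolds to `J.Acceptable m w ∧ J.MPrefers M m w ∧ J.WPrefers M w m`.
def MPrefers [DecidableEq W] (J : SMI U W) (M : Set (U × W)) (m : U) (w : W) : Prop :=
  ¬ MMatched M m ∨ ∃ w', (m, w') ∈ M ∧ J.mrank m w < J.mrank m w'

def WPrefers [DecidableEq U] (J : SMI U W) (M : Set (U × W)) (w : W) (m : U) : Prop :=
  ¬ WMatched M w ∨ ∃ m', (m', w) ∈ M ∧ J.wrank w m < J.wrank w m'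

section Matching

variable {J : SMI U W} {M : Set (U × W)}

theorem IsMatching.acceptable (hM : J.IsMatching M) {m : U} {w : W} (h : (m, w) ∈ M) :
    J.Acceptable m w :=
  hM.1 _ h

theorem IsMatching.right_unique (hM : J.IsMatching M) {m : U} {w w' : W} (h : (m, w) ∈ M)
    (h' : (m, w') ∈ M) : w = w' :=
  congrArg Prod.snd (hM.2.1 _ h _ h' rfl)

theorem IsMatching.left_unique (hM : J.IsMatching M) {m m' : U} {w : W} (h : (m, w) ∈ M)
    (h' : (m', w) ∈ M) : m = m' :=
  congrArg Prod.fst (hM.2.2 _ h _ h' rfl)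

theorem IsMatching.mmatched_of_wmatched [Finite U] {N : Set (U × W)} (hM : J.IsMatching M)
    (hP : Perfect M) (hN : J.IsMatching N) (hW : ∀ w, WMatched N w) (m : U) : MMatched N m :=
  forall_exists_rel_of_injective_rels (A := Set.univ) (B := Set.univ)
    (R := fun m w => (m, w) ∈ M) (S := fun m w => (m, w) ∈ N)
    (fun _ _ _ => hM.left_unique) (fun _ _ _ => hN.right_unique)
    (fun m _ => (hP.1 m).imp fun _ h => ⟨trivial, h⟩)
    (fun w _ => (hW w).imp fun _ h => ⟨trivial, h⟩) m trivial

theorem IsMatching.wmatched_of_mmatched [Finite W] {N : Set (U × W)} (hM : J.IsMatching M)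
    (hP : Perfect M) (hN : J.IsMatching N) (hU : ∀ m, MMatched N m) (w : W) : WMatched N w :=
  forall_exists_rel_of_injective_rels (A := Set.univ) (B := Set.univ)
    (R := fun w m => (m, w) ∈ M) (S := fun w m => (m, w) ∈ N)
    (fun _ _ _ => hM.right_unique) (fun _ _ _ => hN.left_unique)
    (fun w _ => (hP.2 w).imp fun _ h => ⟨trivial, h⟩)
    (fun m _ => (hU m).imp fun _ h => ⟨trivial, h⟩) w trivial

end Matching

theorem mrank_lt_of_le_of_ne [DecidableEq W] (J : SMI U W) {m : U} {w w' : W} (hw : w ∈ J.mpref m)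
    (hle : J.mrank m w ≤ J.mrank m w') (hne : w ≠ w') : J.mrank m w < J.mrank m w' :=
  hle.lt_of_ne fun h => hne <| (List.idxOf_inj hw).mp (by unfold mrank at h; omega)

theorem wrank_lt_of_le_of_ne [DecidableEq U] (J : SMI U W) {w : W} {m m' : U} (hm : m ∈ J.wpref w)
    (hle : J.wrank w m ≤ J.wrank w m') (hne : m ≠ m') : J.wrank w m < J.wrank w m' :=
  hle.lt_of_ne fun h => hne <| (List.idxOf_inj hm).mp (by unfold wrank at h; omega)

section Stable

variable [DecidableEq U] [DecidableEq W] {J : SMI U W} {M M' : Set (U × W)}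

theorem IsStable.exists_wrank_lt_of_mprefers (hM : J.IsStable M) {m : U} {w : W}
    (hacc : J.Acceptable m w) (hm : J.MPrefers M m w) :
    ∃ m', (m', w) ∈ M ∧ J.wrank w m' < J.wrank w m := by
  by_contra! hw
  refine hM.2 m w ⟨hacc, hm, ?_⟩
  by_cases hwM : WMatched M w
  · obtain ⟨m', hm'⟩ := hwM
    have hne : m ≠ m' := by
      rintro rfl
      rcases hm with h | ⟨w', hw', hlt⟩
      · exact h ⟨w, hm'⟩
      · exact (hM.1.right_unique hm' hw' ▸ hlt).false
    exact Or.inr ⟨m', hm', J.wrank_lt_of_le_of_ne hacc.2 (hw m' hm') hne⟩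
  · exact Or.inl hwM

theorem IsStable.exists_mrank_lt_of_wprefers (hM : J.IsStable M) {m : U} {w : W}
    (hacc : J.Acceptable m w) (hw : J.WPrefers M w m) :
    ∃ w', (m, w') ∈ M ∧ J.mrank m w' < J.mrank m w := by
  by_contra! hm
  refine hM.2 m w ⟨hacc, ?_, hw⟩
  by_cases hmM : MMatched M m
  · obtain ⟨w', hw'⟩ := hmM
    have hne : w ≠ w' := by
      rintro rfl
      rcases hw with h | ⟨m', hm', hlt⟩
      · exact h ⟨m, hw'⟩
      · exact (hM.1.left_unique hw' hm' ▸ hlt).false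
    exact Or.inr ⟨w', hw', J.mrank_lt_of_le_of_ne hacc.1 (hm w' hw') hne⟩
  · exact Or.inl hmM

/-- The rural hospitals theorem, for men. -/
theorem IsStable.mmatched_of_mmatched [Finite U] (hM : J.IsStable M) (hM' : J.IsStable M')
    {m : U} (h : MMatched M m) : MMatched M' m := by
  obtain ⟨w, hmw⟩ := h
  by_contra hm
  -- `M` maps the men who prefer `M` into the women who prefer `M'`, and `M'` maps back.
  refine hm <| forall_exists_rel_of_injective_rels
    (A := {m | ∃ w, (m, w) ∈ M ∧ J.MPrefers M' m w})
    (B := {w | ∃ m, (m, w) ∈ M' ∧ J.WPrefers M w m})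
    (R := fun m w => (m, w) ∈ M) (S := fun m w => (m, w) ∈ M')
    (fun _ _ _ => hM.1.left_unique) (fun _ _ _ => hM'.1.right_unique) ?_ ?_ m ⟨w, hmw, Or.inl hm⟩
  · rintro m ⟨w, hmw, hpref⟩
    obtain ⟨m', hm'w, hlt⟩ := hM'.exists_wrank_lt_of_mprefers (hM.1.acceptable hmw) hpref
    exact ⟨w, ⟨m', hm'w, Or.inr ⟨m, hmw, hlt⟩⟩, hmw⟩
  · rintro w ⟨m, hmw, hpref⟩
    obtain ⟨w', hmw', hlt⟩ := hM.exists_mrank_lt_of_wprefers (hM'.1.acceptable hmw) hpref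
    exact ⟨m, ⟨w', hmw', Or.inr ⟨w, hmw, hlt⟩⟩, hmw⟩

theorem IsStable.perfect_of_perfect [Finite U] [Finite W] (hM : J.IsStable M) (hP : Perfect M)
    (hM' : J.IsStable M') : Perfect M' :=
  have hmen : ∀ m, MMatched M' m := fun m => hM.mmatched_of_mmatched hM' (hP.1 m)
  ⟨hmen, hM.1.wmatched_of_mmatched hP hM'.1 hmen⟩

end Stable

section Join

variable [DecidableEq U] {J : SMI U W}

/-- For `S = M₁ ∪ M₂` this is the join of `M₁` and `M₂` in the lattice of stable matchings. -/
def womanBest (J : SMI U W) (S : Set (U × W)) : Set (U × W) :=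
  {p | p ∈ S ∧ ∀ m, (m, p.2) ∈ S → J.wrank p.2 p.1 ≤ J.wrank p.2 m}

theorem wmatched_womanBest [Finite U] {S : Set (U × W)} {w : W} (h : WMatched S w) :
    WMatched (J.womanBest S) w := by
  obtain ⟨m, hm, hmin⟩ := Set.exists_min_image {m | (m, w) ∈ S} (J.wrank w) (Set.toFinite _) h
  exact ⟨m, hm, hmin⟩

variable [DecidableEq W] {M₁ M₂ : Set (U × W)}

theorem mrank_lt_of_mem_womanBest_union (hM₁ : J.IsMatching M₁) (hM₂ : J.IsStable M₂)
    {m : U} {w w' : W} (h : (m, w) ∈ J.womanBest (M₁ ∪ M₂)) (hw : WMatched M₂ w)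
    (hmw' : (m, w') ∈ M₂) (hne : w ≠ w') : J.mrank m w' < J.mrank m w := by
  obtain ⟨hmem, hbest⟩ := h
  obtain ⟨m₂, hm₂⟩ := hw
  have hacc : J.Acceptable m w := hmem.elim hM₁.acceptable hM₂.1.acceptable
  have hm₂ne : m ≠ m₂ := by
    rintro rfl
    exact hne (hM₂.1.right_unique hm₂ hmw')
  have hlt := J.wrank_lt_of_le_of_ne hacc.2 (hbest m₂ (Or.inr hm₂)) hm₂ne
  obtain ⟨w'', hmw'', hlt'⟩ := hM₂.exists_mrank_lt_of_wprefers hacc (Or.inr ⟨m₂, hm₂, hlt⟩)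
  rwa [hM₂.1.right_unique hmw'' hmw'] at hlt'

theorem isMatching_womanBest_union (hM₁ : J.IsStable M₁) (hM₂ : J.IsStable M₂)
    (hP₁ : Perfect M₁) (hP₂ : Perfect M₂) : J.IsMatching (J.womanBest (M₁ ∪ M₂)) := by
  have hacc : ∀ p ∈ J.womanBest (M₁ ∪ M₂), J.Acceptable p.1 p.2 := fun p hp =>
    hp.1.elim (hM₁.1.1 p) (hM₂.1.1 p)
  refine ⟨hacc, ?_, ?_⟩
  · rintro ⟨m, w⟩ hw ⟨_, w'⟩ hw' rfl
    refine congrArg (Prod.mk m) ?_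
    by_contra! hne
    have hw₂ : J.womanBest (M₁ ∪ M₂) = J.womanBest (M₂ ∪ M₁) := by rw [Set.union_comm]
    -- a man holding two partners in the join would prefer each of them to the other
    rcases hw.1 with h | h <;> rcases hw'.1 with h' | h'
    · exact hne (hM₁.1.right_unique h h')
    · have := mrank_lt_of_mem_womanBest_union hM₁.1 hM₂ hw (hP₂.2 w) h' hne
      have := mrank_lt_of_mem_womanBest_union hM₂.1 hM₁ (hw₂ ▸ hw') (hP₁.2 w') h hne.symm
      omega
    · have := mrank_lt_of_mem_womanBest_union hM₂.1 hM₁ (hw₂ ▸ hw) (hP₁.2 w) h' hne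
      have := mrank_lt_of_mem_womanBest_union hM₁.1 hM₂ hw' (hP₂.2 w') h hne.symm
      omega
    · exact hne (hM₂.1.right_unique h h')
  · rintro ⟨m, w⟩ hm ⟨m', _⟩ hm' rfl
    have hle := hm.2 m' hm'.1
    have hge := hm'.2 m hm.1
    refine congrArg (Prod.mk · w) ?_
    by_contra! hne
    exact (J.wrank_lt_of_le_of_ne (hacc _ hm).2 hle hne).not_ge hge

theorem perfect_womanBest_union [Finite U] (hM₁ : J.IsStable M₁) (hM₂ : J.IsStable M₂)
    (hP₁ : Perfect M₁) (hP₂ : Perfect M₂) : Perfect (J.womanBest (M₁ ∪ M₂)) :=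
  have hW : ∀ w, WMatched (J.womanBest (M₁ ∪ M₂)) w := fun w =>
    wmatched_womanBest ((hP₁.2 w).imp fun _ => Or.inl)
  ⟨hM₁.1.mmatched_of_wmatched hP₁ (isMatching_womanBest_union hM₁ hM₂ hP₁ hP₂) hW, hW⟩

theorem isStable_womanBest_union [Finite U] (hM₁ : J.IsStable M₁) (hM₂ : J.IsStable M₂)
    (hP₁ : Perfect M₁) (hP₂ : Perfect M₂) : J.IsStable (J.womanBest (M₁ ∪ M₂)) := by
  have hP := perfect_womanBest_union hM₁ hM₂ hP₁ hP₂
  refine ⟨isMatching_womanBest_union hM₁ hM₂ hP₁ hP₂, ?_⟩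
  rintro m w ⟨hacc, hm | ⟨w', hmw', hlt⟩, hw | ⟨m₀, hm₀, hlt₀⟩⟩
  · exact hm (hP.1 m)
  · exact hm (hP.1 m)
  · exact hw (hP.2 w)
  -- `(m, w)` blocks whichever of `M₁`, `M₂` gives `m` his partner in the join
  obtain ⟨M, hM, hPM, hMsub, hmw'⟩ : ∃ M, J.IsStable M ∧ Perfect M ∧ M ⊆ M₁ ∪ M₂ ∧ (m, w') ∈ M :=
    hmw'.1.elim (fun h => ⟨M₁, hM₁, hP₁, Set.subset_union_left, h⟩)
      (fun h => ⟨M₂, hM₂, hP₂, Set.subset_union_right, h⟩)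
  obtain ⟨mM, hmM⟩ := hPM.2 w
  exact hM.2 m w ⟨hacc, Or.inr ⟨w', hmw', hlt⟩,
    Or.inr ⟨mM, hmM, hlt₀.trans_le (hm₀.2 mM (hMsub hmM))⟩⟩

theorem exists_womanOptimal [Finite U] [Finite W] {M : Set (U × W)} (hM : J.IsStable M)
    (hP : Perfect M) :
    ∃ N, J.IsStable N ∧ Perfect N ∧ ∀ M', J.IsStable M' →
      ∀ (w : W) (m m' : U), (m, w) ∈ N → (m', w) ∈ M' → J.wrank w m ≤ J.wrank w m' := by
  -- the pairs `(m, w)` that `w` likes at most as much as her partner; the join enlarges this set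
  let D : Set (U × W) → Set (U × W) := fun M =>
    {p | ∃ m, (m, p.2) ∈ M ∧ J.wrank p.2 m ≤ J.wrank p.2 p.1}
  obtain ⟨N, hN, hmax⟩ :=
    Set.Finite.exists_maximalFor D {M | J.IsStable M} (Set.toFinite _) ⟨M, hM⟩
  have hNP := hM.perfect_of_perfect hP hN
  refine ⟨N, hN, hNP, fun M' hM' w m m' hmN hm'M' => ?_⟩
  have hM'P := hM.perfect_of_perfect hP hM'
  set N₂ := J.womanBest (N ∪ M')
  have hN₂P : Perfect N₂ := perfect_womanBest_union hN hM' hNP hM'P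
  have hDN : D N ⊆ D N₂ := by
    rintro ⟨x, v⟩ ⟨mN, hmN, hle⟩
    obtain ⟨m₂, hm₂⟩ := hN₂P.2 v
    exact ⟨m₂, hm₂, (hm₂.2 mN (Or.inl hmN)).trans hle⟩
  obtain ⟨m₂, hm₂⟩ := hN₂P.2 w
  obtain ⟨m'', hm''N, hle⟩ :=
    hmax (isStable_womanBest_union hN hM' hNP hM'P) hDN (⟨m₂, hm₂, le_rfl⟩ : (m₂, w) ∈ D N₂)
  rw [hN.1.left_unique hm''N hmN] at hle
  exact hle.trans (hm₂.2 m' (Or.inr hm'M'))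

end Join

section Truncation

variable [DecidableEq W] {I : SMI U W} {a : ℕ} {M : Set (U × W)} {m : U} {w : W}

theorem mem_take_mpref_iff : w ∈ (I.mpref m).take a ↔ w ∈ I.mpref m ∧ I.mrank m w ≤ a := by
  refine ⟨fun h => ?_, fun ⟨hw, hle⟩ => ?_⟩
  · have hw := (List.take_sublist a _).subset h
    exact ⟨hw, Nat.succ_le_of_lt ((List.mem_take_iff_idxOf_lt hw).mp h)⟩
  · exact (List.mem_take_iff_idxOf_lt hw).mpr hle

theorem truncate_acceptable_iff :
    (I.truncate a).Acceptable m w ↔ I.Acceptable m w ∧ I.mrank m w ≤ a := by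
  simp only [Acceptable, truncate, List.mem_filter, decide_eq_true_eq, mem_take_mpref_iff]
  tauto

theorem truncate_mrank (h : I.mrank m w ≤ a) : (I.truncate a).mrank m w = I.mrank m w := by
  by_cases hw : w ∈ I.mpref m
  · exact congrArg (· + 1) ((List.take_prefix a _).idxOf_eq_of_mem (mem_take_mpref_iff.mpr ⟨hw, h⟩))
  · simp only [mrank, truncate, List.idxOf_of_notMem hw,
      List.idxOf_of_notMem (fun h' => hw ((List.take_sublist a _).subset h')), List.length_take]
    simp only [mrank, List.idxOf_of_notMem hw] at h
    omega

theorem truncate_mprefers_iff (hM : ∀ p ∈ M, (I.truncate a).Acceptable p.1 p.2)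
    (hacc : (I.truncate a).Acceptable m w) :
    (I.truncate a).MPrefers M m w ↔ I.MPrefers M m w := by
  refine or_congr Iff.rfl (exists_congr fun w' => and_congr_right fun hw' => ?_)
  rw [truncate_mrank (truncate_acceptable_iff.mp hacc).2,
    truncate_mrank (truncate_acceptable_iff.mp (hM _ hw')).2]

variable [DecidableEq U]

theorem truncate_wrank_lt_iff {m' : U} (hm : (I.truncate a).Acceptable m w)
    (hm' : (I.truncate a).Acceptable m' w) :
    (I.truncate a).wrank w m < (I.truncate a).wrank w m' ↔ I.wrank w m < I.wrank w m' :=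
  Nat.add_lt_add_iff_right.trans <|
    (List.idxOf_filter_lt_idxOf_filter_iff (p := fun m => decide (w ∈ (I.mpref m).take a))
      (decide_eq_true hm.1) (decide_eq_true hm'.1)).trans Nat.add_lt_add_iff_right.symm

theorem truncate_wrank_le_iff {m' : U} (hm : (I.truncate a).Acceptable m w)
    (hm' : (I.truncate a).Acceptable m' w) :
    (I.truncate a).wrank w m ≤ (I.truncate a).wrank w m' ↔ I.wrank w m ≤ I.wrank w m' := by
  simpa only [not_lt] using (truncate_wrank_lt_iff hm' hm).not

theorem truncate_wprefers_iff (hM : ∀ p ∈ M, (I.truncate a).Acceptable p.1 p.2)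
    (hacc : (I.truncate a).Acceptable m w) :
    (I.truncate a).WPrefers M w m ↔ I.WPrefers M w m :=
  or_congr Iff.rfl (exists_congr fun _ => and_congr_right fun hm' =>
    truncate_wrank_lt_iff hacc (hM _ hm'))

theorem IsStable.truncate (hM : I.IsStable M) (ha : ∀ p ∈ M, I.mrank p.1 p.2 ≤ a) :
    (I.truncate a).IsStable M := by
  have hacc : ∀ p ∈ M, (I.truncate a).Acceptable p.1 p.2 := fun p hp =>
    truncate_acceptable_iff.mpr ⟨hM.1.1 p hp, ha p hp⟩
  refine ⟨⟨hacc, hM.1.2⟩, fun m w ⟨haccT, hm, hw⟩ => hM.2 m w ⟨?_, ?_, ?_⟩⟩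
  · exact (truncate_acceptable_iff.mp haccT).1
  · exact (truncate_mprefers_iff hacc haccT).mp hm
  · exact (truncate_wprefers_iff hacc haccT).mp hw

theorem IsStable.of_truncate (hM : (I.truncate a).IsStable M) (hmen : ∀ m, MMatched M m) :
    I.IsStable M := by
  refine ⟨⟨fun p hp => (truncate_acceptable_iff.mp (hM.1.1 p hp)).1, hM.1.2⟩, ?_⟩
  rintro m w ⟨hacc, hm, hw⟩
  have haccT : (I.truncate a).Acceptable m w := by
    refine truncate_acceptable_iff.mpr ⟨hacc, ?_⟩
    rcases hm with h | ⟨w', hw', hlt⟩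
    · exact absurd (hmen m) h
    · exact hlt.le.trans (truncate_acceptable_iff.mp (hM.1.1 _ hw')).2
  exact hM.2 m w ⟨haccT, (truncate_mprefers_iff hM.1.1 haccT).mpr hm,
    (truncate_wprefers_iff hM.1.1 haccT).mpr hw⟩

end Truncation

section Degrees

variable [Finite U] [Finite W] {M : Set (U × W)}

theorem mrank_le_dU [DecidableEq W] (I : SMI U W) {p : U × W} (hp : p ∈ M) :
    I.mrank p.1 p.2 ≤ I.dU M :=
  le_csSup ((Set.finite_range fun q : U × W => I.mrank q.1 q.2).subset
    (by rintro _ ⟨q, -, rfl⟩; exact ⟨q, rfl⟩)).bddAbove ⟨p, hp, rfl⟩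

theorem wrank_le_dW [DecidableEq U] (I : SMI U W) {p : U × W} (hp : p ∈ M) :
    I.wrank p.2 p.1 ≤ I.dW M :=
  le_csSup ((Set.finite_range fun q : U × W => I.wrank q.2 q.1).subset
    (by rintro _ ⟨q, -, rfl⟩; exact ⟨q, rfl⟩)).bddAbove ⟨p, hp, rfl⟩

end Degrees

theorem dU_le [DecidableEq W] (I : SMI U W) {M : Set (U × W)} {c : ℕ}
    (h : ∀ p ∈ M, I.mrank p.1 p.2 ≤ c) : I.dU M ≤ c :=
  csSup_le' (by rintro _ ⟨p, hp, rfl⟩; exact h p hp)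

theorem dW_le [DecidableEq U] (I : SMI U W) {M : Set (U × W)} {c : ℕ}
    (h : ∀ p ∈ M, I.wrank p.2 p.1 ≤ c) : I.dW M ≤ c :=
  csSup_le' (by rintro _ ⟨p, hp, rfl⟩; exact h p hp)

end SMI

/-- There is a truncation rank `a` between `d_U(M_0)` and `d_U(M_z)` whose
woman-optimal stable matching is a stable matching of `I` minimising the
regret sum over all stable matchings of `I`. -/
theorem stmt_10 {U W : Type} [Fintype U] [Fintype W] [DecidableEq U] [DecidableEq W]
    (I : SMI U W)
    (hperf : ∀ M : Set (U × W), I.IsStable M → SMI.Perfect M)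
    (M0 Mz : Set (U × W))
    (h0 : I.ManOptWomanPess M0) (hz : I.WomanOptManPess Mz) :
    ∃ (a : ℕ) (N : Set (U × W)),
      I.dU M0 ≤ a ∧ a ≤ I.dU Mz ∧
      (I.truncate a).IsStable N ∧ SMI.Perfect N ∧
      (∀ M' : Set (U × W), (I.truncate a).IsStable M' →
        ∀ (w : W) (m m' : U), (m, w) ∈ N → (m', w) ∈ M' →
          (I.truncate a).wrank w m ≤ (I.truncate a).wrank w m') ∧
      I.IsStable N ∧
      ∀ M : Set (U × W), I.IsStable M → I.dU N + I.dW N ≤ I.dU M + I.dW M := by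
  obtain ⟨hM0, hopt0⟩ := h0
  obtain ⟨hMz, hoptz⟩ := hz
  obtain ⟨Ms, hMs, hmin⟩ := Set.exists_min_image {M | I.IsStable M} (fun M => I.dU M + I.dW M)
    (Set.toFinite _) ⟨M0, hM0⟩
  have hPs := hperf Ms hMs
  set a := I.dU Ms
  have hMsT : (I.truncate a).IsStable Ms := hMs.truncate fun p hp => I.mrank_le_dU hp
  obtain ⟨N, hNT, hNP, hNopt⟩ := SMI.exists_womanOptimal hMsT hPs
  have hdU : I.dU N ≤ a := I.dU_le fun p hp => (SMI.truncate_acceptable_iff.mp (hNT.1.1 p hp)).2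
  have hdW : I.dW N ≤ I.dW Ms := I.dW_le fun ⟨m, w⟩ hp => by
    obtain ⟨ms, hms⟩ := hPs.2 w
    calc I.wrank w m ≤ I.wrank w ms := (SMI.truncate_wrank_le_iff (hNT.1.1 _ hp)
          (hMsT.1.1 (ms, w) hms)).mp (hNopt Ms hMsT w m ms hp hms)
      _ ≤ I.dW Ms := I.wrank_le_dW hms
  refine ⟨a, N, I.dU_le fun ⟨m, w₀⟩ hp => ?_, I.dU_le fun ⟨m, w⟩ hp => ?_, hNT, hNP, hNopt,
    hNT.of_truncate hNP.1, fun M hM => (add_le_add hdU hdW).trans (hmin M hM)⟩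
  · obtain ⟨w, hw⟩ := hPs.1 m
    exact ((hopt0 Ms hMs).1 m w₀ w hp hw).trans (I.mrank_le_dU hw)
  · obtain ⟨wz, hwz⟩ := (hperf Mz hMz).1 m
    exact ((hoptz Ms hMs).2 m wz w hwz hp).trans (I.mrank_le_dU hwz)
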